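/- Let (H, ι, ▷) be a weak post-Hopf algebroid over R and let P(H) = {x ∈ H : Δ(x) = x ⊗_R 1 + 1 ⊗_R x} be the set of primitive elements. Then P(H) is an R-submodule of H closed under the commutator [x,y] = xy − yx and under ▷; for each x ∈ P(H) the map ρ(x) : f ↦ ε(x ▷ ι(f)) is a k-linear derivation of R; ρ is an R-module homomorphism; ρ([x,y] + x ▷ y − y ▷ x) = ρ(x)∘ρ(y) − ρ(y)∘ρ(x) for all x, y ∈ P(H); and (R, P(H), [·,·], ρ, ▷) is a post-Lie-Rinehart algebra. -/

import Mathlib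

/-!
STATEMENT 2: In any weak post-Hopf algebroid `(H, ι, ▷)` over `R`, for all `f ∈ R` and
`x ∈ H` one has `x ▷ ι(f) = ι(ε(x ▷ ι(f)))` and `ι(f) ▷ x = f·x`.

A cocommutative Hopf `R`-algebra is encoded via Mathlib's `HopfAlgebra R H` (so `ι` is
`algebraMap R H`, whose image is central) together with a cocommutativity axiom.  The
comultiplication is handled through a chosen Sweedler representation `comul x = ∑ c1 x i ⊗ c2 x i`.
-/

open scoped TensorProduct

/-- A weak post-Hopf algebroid over `R`: a cocommutative Hopf `R`-algebra `(H, ι)` together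
with a `k`-bilinear map `▷ : H × H → H` satisfying axioms (1)–(7). -/
structure WeakPostHopfAlgebroid (k R H : Type*) [Field k] [CharZero k]
    [CommRing R] [Algebra k R] [Ring H] [HopfAlgebra R H]
    [Algebra k H] [IsScalarTower k R H] where
  /-- the post-Hopf product `▷` -/
  tr : H → H → H
  /-- size of the chosen Sweedler representation of `comul x` -/
  n : H → ℕ
  /-- first Sweedler components -/
  c1 : H → ℕ → H
  /-- second Sweedler components -/
  c2 : H → ℕ → H
  repr : ∀ x : H, Coalgebra.comul (R := R) x
      = ∑ i ∈ Finset.range (n x), c1 x i ⊗ₜ[R] c2 x i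
  cocomm : ∀ x : H, (TensorProduct.comm R H H) (Coalgebra.comul (R := R) x)
      = Coalgebra.comul (R := R) x
  tr_add_left : ∀ x y z : H, tr (x + y) z = tr x z + tr y z
  tr_add_right : ∀ x y z : H, tr x (y + z) = tr x y + tr x z
  tr_smul_right : ∀ (a : k) (x y : H), tr x (a • y) = a • tr x y
  /-- axiom (1): `Δ(x ▷ y) = (x₁ ▷ y₁) ⊗ (x₂ ▷ y₂)` -/
  comul_tr : ∀ x y : H, Coalgebra.comul (R := R) (tr x y)
      = ∑ i ∈ Finset.range (n x), ∑ j ∈ Finset.range (n y),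
          tr (c1 x i) (c1 y j) ⊗ₜ[R] tr (c2 x i) (c2 y j)
  /-- axiom (2): `x ▷ 1 = ι(ε(x))` -/
  tr_one : ∀ x : H, tr x 1 = algebraMap R H (Coalgebra.counit (R := R) x)
  /-- axiom (3): `1 ▷ x = x` -/
  one_tr : ∀ x : H, tr 1 x = x
  /-- axiom (4): `ι(ε(x ▷ y)) = x ▷ ι(ε(y))` -/
  counit_tr : ∀ x y : H, algebraMap R H (Coalgebra.counit (R := R) (tr x y))
      = tr x (algebraMap R H (Coalgebra.counit (R := R) y))
  /-- axiom (5): `(f·x) ▷ y = f·(x ▷ y)` -/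
  tr_smul_left : ∀ (f : R) (x y : H), tr (f • x) y = f • tr x y
  /-- axiom (6): `x ▷ (yz) = (x₁ ▷ y)(x₂ ▷ z)` -/
  tr_mul : ∀ x y z : H, tr x (y * z)
      = ∑ i ∈ Finset.range (n x), tr (c1 x i) y * tr (c2 x i) z
  /-- axiom (7): `x ▷ (y ▷ z) = (x₁(x₂ ▷ y)) ▷ z` -/
  tr_tr : ∀ x y z : H, tr x (tr y z)
      = tr (∑ i ∈ Finset.range (n x), c1 x i * tr (c2 x i) y) z

/-- The Grossman–Larson product `x *_▷ y := x₁(x₂ ▷ y)` (computed with the chosen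
Sweedler representation). -/
def WeakPostHopfAlgebroid.gl {k R H : Type*} [Field k] [CharZero k]
    [CommRing R] [Algebra k R] [Ring H] [HopfAlgebra R H]
    [Algebra k H] [IsScalarTower k R H]
    (W : WeakPostHopfAlgebroid k R H) (x y : H) : H :=
  ∑ i ∈ Finset.range (W.n x), W.c1 x i * W.tr (W.c2 x i) y

/-- `x` is a primitive element: `Δ(x) = x ⊗ 1 + 1 ⊗ x`. -/
def IsPrimitive (R : Type*) {H : Type*} [CommRing R] [Ring H] [HopfAlgebra R H]
    (x : H) : Prop :=
  Coalgebra.comul (R := R) x = x ⊗ₜ[R] (1 : H) + (1 : H) ⊗ₜ[R] x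

/-!
For a primitive `x` every Sweedler sum `∑ Φ(x₁, x₂)` collapses to `Φ(x, 1) + Φ(1, x)`, and
`1 ▷ -` is the identity. Axiom (6) then makes `x ▷ -` a derivation of `H`, and by axiom (4) it
maps `ι(R)` into itself, which yields the derivation `ρ(x)` of `R` and the rule
`x ▷ (f y) = f (x ▷ y) + ρ(x)(f) y`. Axiom (7) becomes `x ▷ (y ▷ z) = (xy) ▷ z + (x ▷ y) ▷ z`,
giving the second post-Lie identity and, on `ι(R)`, the Lie-homomorphism property of `ρ`.
Axiom (1) says that `Δ(x ▷ y)` is `Δ y` acted on by `x ▷ -` as a derivation of `H ⊗_R H`; since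
`x ▷ 1 = 0`, the element `x ▷ y` is primitive whenever `y` is.
-/

namespace TensorProduct

variable {R M N : Type*} [CommSemiring R] [AddCommMonoid M] [Module R M] [AddCommMonoid N]
  [Module R N]

variable (D : M →+ M) (E : N →+ N) (δ : R → R)
  (hD : ∀ (r : R) (m : M), D (r • m) = r • D m + δ r • m)
  (hE : ∀ (r : R) (n : N), E (r • n) = r • E n + δ r • n)

/-- Neither `D ⊗ id` nor `id ⊗ E` descends to `M ⊗[R] N`, but the `δ`-terms cancel in their
sum. -/
def leibnizAddHom : M ⊗[R] N →+ M ⊗[R] N :=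
  liftAddHom
    { toFun := fun m =>
        { toFun := fun n => D m ⊗ₜ n + m ⊗ₜ E n
          map_zero' := by simp only [map_zero, tmul_zero, add_zero]
          map_add' := fun n n' => by simp only [map_add, tmul_add]; abel }
      map_zero' := by ext n; simp only [map_zero, zero_tmul, add_zero]; rfl
      map_add' := fun m m' => by
        ext n; simp only [map_add, add_tmul, AddMonoidHom.coe_mk, ZeroHom.coe_mk,
          AddMonoidHom.add_apply]; abel }
    (fun r m n => by
      simp only [AddMonoidHom.coe_mk, ZeroHom.coe_mk, hD, hE, add_tmul, tmul_add, smul_tmul]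
      abel)

end TensorProduct

namespace IsPrimitive

variable {R H : Type*} [CommRing R] [Ring H] [HopfAlgebra R H]

theorem zero : IsPrimitive R (0 : H) := by
  simp [IsPrimitive]

theorem add {x y : H} (hx : IsPrimitive R x) (hy : IsPrimitive R y) :
    IsPrimitive R (x + y) := by
  rw [IsPrimitive, map_add, hx, hy, TensorProduct.add_tmul, TensorProduct.tmul_add]
  abel

theorem smul (f : R) {x : H} (hx : IsPrimitive R x) : IsPrimitive R (f • x) := by
  rw [IsPrimitive, map_smul, hx, smul_add, TensorProduct.smul_tmul', TensorProduct.tmul_smul]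

theorem mul_sub_mul {x y : H} (hx : IsPrimitive R x) (hy : IsPrimitive R y) :
    IsPrimitive R (x * y - y * x) := by
  rw [IsPrimitive, map_sub, Bialgebra.comul_mul, Bialgebra.comul_mul, hx, hy]
  simp only [mul_add, add_mul, Algebra.TensorProduct.tmul_mul_tmul, one_mul, mul_one,
    TensorProduct.sub_tmul, TensorProduct.tmul_sub]
  abel

theorem counit_eq_zero {x : H} (hx : IsPrimitive R x) : Coalgebra.counit (R := R) x = 0 := by
  have h := congrArg (TensorProduct.lid R H) (Coalgebra.rTensor_counit_comul (R := R) x)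
  rw [hx] at h
  simp only [map_add, LinearMap.rTensor_tmul, TensorProduct.lid_tmul, Bialgebra.counit_one,
    one_smul, add_eq_right] at h
  simpa using congrArg (Coalgebra.counit (R := R)) h

end IsPrimitive

namespace WeakPostHopfAlgebroid

variable {k R H : Type*} [Field k] [CharZero k]
    [CommRing R] [Algebra k R] [Ring H] [HopfAlgebra R H]
    [Algebra k H] [IsScalarTower k R H]
    (W : WeakPostHopfAlgebroid k R H)

def trLeft (y : H) : H →ₗ[R] H where
  toFun a := W.tr a y
  map_add' a b := W.tr_add_left a b y
  map_smul' f a := W.tr_smul_left f a y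

def trRight (x : H) : H →+ H :=
  AddMonoidHom.mk' (W.tr x) (W.tr_add_right x)

@[simp] theorem trLeft_apply (y a : H) : W.trLeft y a = W.tr a y := rfl

theorem tr_sub_left (x y z : H) : W.tr (x - y) z = W.tr x z - W.tr y z :=
  map_sub (W.trLeft z) x y

theorem tr_sub_right (x y z : H) : W.tr x (y - z) = W.tr x y - W.tr x z :=
  map_sub (W.trRight x) y z

theorem sum_sweedler_of_isPrimitive {K : Type*} [AddCommGroup K] [Module R K]
    (Φ : H →ₗ[R] H →ₗ[R] K) {x : H} (hx : IsPrimitive R x) :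
    ∑ i ∈ Finset.range (W.n x), Φ (W.c1 x i) (W.c2 x i) = Φ x 1 + Φ 1 x := by
  have h := congrArg (TensorProduct.lift Φ) (W.repr x)
  rw [hx] at h
  simpa using h.symm

theorem tr_algebraMap (a : H) (f : R) :
    W.tr a (algebraMap R H f)
      = algebraMap R H (Coalgebra.counit (R := R) (W.tr a (algebraMap R H f))) := by
  rw [W.counit_tr, Bialgebra.counit_algebraMap]

theorem tr_one_of_isPrimitive {x : H} (hx : IsPrimitive R x) : W.tr x 1 = 0 := by
  rw [W.tr_one, hx.counit_eq_zero, map_zero]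

theorem tr_mul_of_isPrimitive {x : H} (hx : IsPrimitive R x) (y z : H) :
    W.tr x (y * z) = W.tr x y * z + y * W.tr x z := by
  rw [W.tr_mul]
  simpa [W.one_tr] using
    W.sum_sweedler_of_isPrimitive ((LinearMap.mul R H).compl₁₂ (W.trLeft y) (W.trLeft z)) hx

theorem tr_smul_of_isPrimitive {x : H} (hx : IsPrimitive R x) (f : R) (y : H) :
    W.tr x (f • y) = f • W.tr x y
      + Coalgebra.counit (R := R) (W.tr x (algebraMap R H f)) • y := by
  rw [Algebra.smul_def, W.tr_mul_of_isPrimitive hx, ← Algebra.smul_def, W.tr_algebraMap x f,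
    ← Algebra.smul_def, add_comm, Bialgebra.counit_algebraMap]

theorem tr_tr_of_isPrimitive {x : H} (hx : IsPrimitive R x) (y z : H) :
    W.tr x (W.tr y z) = W.tr (x * y) z + W.tr (W.tr x y) z := by
  have h := W.sum_sweedler_of_isPrimitive ((LinearMap.mul R H).compl₁₂ LinearMap.id (W.trLeft y)) hx
  simp only [LinearMap.compl₁₂_apply, LinearMap.mul_apply', LinearMap.id_apply, trLeft_apply,
    W.one_tr, one_mul] at h
  rw [W.tr_tr, h, W.tr_add_left]

theorem tr_lieBracket_of_isPrimitive {x y : H} (hx : IsPrimitive R x) (hy : IsPrimitive R y)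
    (z : H) :
    W.tr ((x * y - y * x) + W.tr x y - W.tr y x) z
      = W.tr x (W.tr y z) - W.tr y (W.tr x z) := by
  rw [W.tr_tr_of_isPrimitive hx, W.tr_tr_of_isPrimitive hy, show
    (x * y - y * x) + W.tr x y - W.tr y x = (x * y + W.tr x y) - (y * x + W.tr y x) by abel,
    W.tr_sub_left, W.tr_add_left, W.tr_add_left]

theorem isPrimitive_tr {x y : H} (hx : IsPrimitive R x) (hy : IsPrimitive R y) :
    IsPrimitive R (W.tr x y) := by
  let Θ : H ⊗[R] H →+ H ⊗[R] H := TensorProduct.leibnizAddHom (W.trRight x) (W.trRight x)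
    (fun f => Coalgebra.counit (R := R) (W.tr x (algebraMap R H f)))
    (W.tr_smul_of_isPrimitive hx) (W.tr_smul_of_isPrimitive hx)
  have hΘ (c d : H) : Θ (c ⊗ₜ d) = W.tr x c ⊗ₜ d + c ⊗ₜ W.tr x d := rfl
  have hΔ : Coalgebra.comul (R := R) (W.tr x y) = Θ (Coalgebra.comul (R := R) y) := by
    rw [W.comul_tr, Finset.sum_comm, W.repr y, map_sum]
    refine Finset.sum_congr rfl fun j _ => ?_
    simpa [hΘ, W.one_tr] using W.sum_sweedler_of_isPrimitive
      ((TensorProduct.mk R H H).compl₁₂ (W.trLeft (W.c1 y j)) (W.trLeft (W.c2 y j))) hx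
  rw [IsPrimitive, hΔ, hy]
  simp [hΘ, W.tr_one_of_isPrimitive hx]

def anchor {x : H} (hx : IsPrimitive R x) : Derivation k R R :=
  Derivation.mk'
    { toFun := fun f => Coalgebra.counit (R := R) (W.tr x (algebraMap R H f))
      map_add' := fun f g => by rw [map_add, W.tr_add_right, map_add]
      map_smul' := fun a f => by
        rw [RingHom.id_apply, Algebra.algebraMap_eq_smul_one, Algebra.algebraMap_eq_smul_one,
          smul_assoc, W.tr_smul_right, ← algebraMap_smul R a (W.tr x (f • 1)), map_smul,
          algebraMap_smul] }
    fun f g => by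
      dsimp only [LinearMap.coe_mk, AddHom.coe_mk]
      rw [map_mul, ← Algebra.smul_def, W.tr_smul_of_isPrimitive hx, map_add, map_smul,
        map_smul, Bialgebra.counit_algebraMap, smul_eq_mul, smul_eq_mul, smul_eq_mul,
        mul_comm (Coalgebra.counit _) g]

theorem anchor_lieBracket {x y : H} (hx : IsPrimitive R x) (hy : IsPrimitive R y) (f : R) :
    Coalgebra.counit (R := R) (W.tr ((x * y - y * x) + W.tr x y - W.tr y x) (algebraMap R H f))
      = W.anchor hx (W.anchor hy f) - W.anchor hy (W.anchor hx f) := by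
  rw [W.tr_lieBracket_of_isPrimitive hx hy, W.tr_algebraMap y, W.tr_algebraMap x f, map_sub]
  rfl

end WeakPostHopfAlgebroid

/-- the primitive elements `P(H)` of a weak post-Hopf algebroid form an
`R`-submodule closed under the commutator and under `▷`; `ρ(x)(f) = ε(x ▷ ι(f))` is a
`k`-linear derivation of `R` for each primitive `x`; `ρ` is an `R`-module homomorphism
and a Lie algebra homomorphism from the sub-adjacent bracket; and
`(R, P(H), [·,·], ρ, ▷)` is a post-Lie-Rinehart algebra. -/
theorem stmt13 {k R H : Type*} [Field k] [CharZero k]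
    [CommRing R] [Algebra k R] [Ring H] [HopfAlgebra R H]
    [Algebra k H] [IsScalarTower k R H]
    (W : WeakPostHopfAlgebroid k R H) :
    -- `P(H)` is an `R`-submodule closed under the commutator and under `▷`
    (IsPrimitive R (0 : H))
    ∧ (∀ x y : H, IsPrimitive R x → IsPrimitive R y → IsPrimitive R (x + y))
    ∧ (∀ (f : R) (x : H), IsPrimitive R x → IsPrimitive R (f • x))
    ∧ (∀ x y : H, IsPrimitive R x → IsPrimitive R y → IsPrimitive R (x * y - y * x))
    ∧ (∀ x y : H, IsPrimitive R x → IsPrimitive R y → IsPrimitive R (W.tr x y))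
    -- for primitive `x`, `ρ(x) : f ↦ ε(x ▷ ι(f))` is a `k`-linear derivation of `R`
    ∧ (∀ x : H, IsPrimitive R x →
        (∀ f g : R, Coalgebra.counit (R := R) (W.tr x (algebraMap R H (f + g)))
            = Coalgebra.counit (R := R) (W.tr x (algebraMap R H f))
              + Coalgebra.counit (R := R) (W.tr x (algebraMap R H g)))
        ∧ (∀ (a : k) (f : R), Coalgebra.counit (R := R) (W.tr x (algebraMap R H (a • f)))
            = a • Coalgebra.counit (R := R) (W.tr x (algebraMap R H f)))
        ∧ (∀ f g : R, Coalgebra.counit (R := R) (W.tr x (algebraMap R H (f * g)))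
            = f * Coalgebra.counit (R := R) (W.tr x (algebraMap R H g))
              + g * Coalgebra.counit (R := R) (W.tr x (algebraMap R H f))))
    -- `ρ` is an `R`-module homomorphism
    ∧ (∀ (f : R) (x : H), IsPrimitive R x → ∀ g : R,
        Coalgebra.counit (R := R) (W.tr (f • x) (algebraMap R H g))
          = f * Coalgebra.counit (R := R) (W.tr x (algebraMap R H g)))
    ∧ (∀ x y : H, IsPrimitive R x → IsPrimitive R y → ∀ g : R,
        Coalgebra.counit (R := R) (W.tr (x + y) (algebraMap R H g))
          = Coalgebra.counit (R := R) (W.tr x (algebraMap R H g))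
            + Coalgebra.counit (R := R) (W.tr y (algebraMap R H g)))
    -- `ρ` is a Lie algebra homomorphism from the sub-adjacent Lie algebra
    ∧ (∀ x y : H, IsPrimitive R x → IsPrimitive R y → ∀ f : R,
        Coalgebra.counit (R := R)
            (W.tr ((x * y - y * x) + W.tr x y - W.tr y x) (algebraMap R H f))
          = Coalgebra.counit (R := R)
              (W.tr x (algebraMap R H (Coalgebra.counit (R := R) (W.tr y (algebraMap R H f)))))
            - Coalgebra.counit (R := R)
              (W.tr y (algebraMap R H (Coalgebra.counit (R := R) (W.tr x (algebraMap R H f))))))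
    -- the post-Lie algebra axioms hold on `P(H)`
    ∧ (∀ x y z : H, IsPrimitive R x → IsPrimitive R y → IsPrimitive R z →
        W.tr x (y * z - z * y)
          = (W.tr x y * z - z * W.tr x y) + (y * W.tr x z - W.tr x z * y))
    ∧ (∀ x y z : H, IsPrimitive R x → IsPrimitive R y → IsPrimitive R z →
        W.tr ((x * y - y * x) + W.tr x y - W.tr y x) z
          = W.tr x (W.tr y z) - W.tr y (W.tr x z))
    -- the compatibility conditions of a post-Lie-Rinehart algebra hold on `P(H)`
    ∧ (∀ (f : R) (x y : H), IsPrimitive R x → IsPrimitive R y →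
        W.tr (f • x) y = f • W.tr x y)
    ∧ (∀ (f : R) (x y : H), IsPrimitive R x → IsPrimitive R y →
        W.tr x (f • y)
          = f • W.tr x y
            + Coalgebra.counit (R := R) (W.tr x (algebraMap R H f)) • y) := by
  refine ⟨IsPrimitive.zero, fun x y hx hy => hx.add hy, fun f x hx => hx.smul f,
    fun x y hx hy => hx.mul_sub_mul hy, fun x y hx hy => W.isPrimitive_tr hx hy,
    fun x hx => ⟨(W.anchor hx).map_add, (W.anchor hx).map_smul, (W.anchor hx).leibniz⟩,
    fun f x _ g => by rw [W.tr_smul_left, map_smul, smul_eq_mul],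
    fun x y _ _ g => by rw [W.tr_add_left, map_add],
    fun x y hx hy f => W.anchor_lieBracket hx hy f,
    fun x y z hx _ _ => ?_,
    fun x y z hx hy _ => W.tr_lieBracket_of_isPrimitive hx hy z,
    fun f x y _ _ => W.tr_smul_left f x y,
    fun f x y hx _ => W.tr_smul_of_isPrimitive hx f y⟩
  rw [W.tr_sub_right, W.tr_mul_of_isPrimitive hx, W.tr_mul_of_isPrimitive hx]
  abel
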